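/- (Knapp example, lower bound.) Let n ≥ 2 and 0 < δ < 1. Define f̂ = χ_{[0,δ]^{n-1}} and u(x', t) = ∫_{ℝ^{n-1}} e^{-πit|ξ|² + 2πi x'·ξ} f̂(ξ) dξ. Then, with c = 1/(40n), for all (x', t) ∈ ℝ^{n-1} × ℝ satisfying |x'_j| ≤ c δ^{-1} for each 1 ≤ j ≤ n-1 and |t| ≤ c δ^{-2}, one has |u(x', t)| ≥ (1/2) δ^{n-1}. In particular |u| ≥ (1/2)δ^{n-1} on a tube of sides ∼ δ^{-1} × ⋯ × δ^{-1} × δ^{-2}. -/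

import Mathlib

/-
On the cube `[0,δ]^{n-1}` the phase `-π t |ξ|² + 2π x'·ξ` has size at most `3π(n-1)c ≤ 1` when
`|x'_j| ≤ c/δ` and `|t| ≤ c/δ²`, so the real part `cos(phase)` of the integrand stays above
`1/2`. No cancellation can occur: the real part of `u` is at least half the volume
`δ^{n-1}` of the cube.
-/

open Real MeasureTheory

/-- The solution of the free Schrödinger equation with Fourier data `F`:
`u(x',t) = ∫_{ℝ^{n-1}} e^{-πit|ξ|² + 2πi x'·ξ} F(ξ) dξ`. -/
noncomputable def schrodingerExt (n : ℕ) (F : EuclideanSpace ℝ (Fin (n-1)) → ℂ)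
    (x : EuclideanSpace ℝ (Fin (n-1))) (t : ℝ) : ℂ :=
  ∫ ξ : EuclideanSpace ℝ (Fin (n-1)),
    Complex.exp (((-(π * t * ‖ξ‖ ^ 2) + 2 * π * (inner ℝ x ξ : ℝ) : ℝ) : ℂ) * Complex.I) * F ξ

noncomputable def schrodingerPhase {ι : Type*} [Fintype ι] (x : EuclideanSpace ℝ ι) (t : ℝ)
    (ξ : EuclideanSpace ℝ ι) : ℝ :=
  -(π * t * ‖ξ‖ ^ 2) + 2 * π * inner ℝ x ξ

theorem continuous_schrodingerPhase {ι : Type*} [Fintype ι] (x : EuclideanSpace ℝ ι) (t : ℝ) :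
    Continuous (schrodingerPhase x t) := by
  unfold schrodingerPhase
  fun_prop

theorem schrodingerExt_indicator_one (n : ℕ) {s : Set (EuclideanSpace ℝ (Fin (n - 1)))}
    (hs : MeasurableSet s) (x : EuclideanSpace ℝ (Fin (n - 1))) (t : ℝ) :
    schrodingerExt n (s.indicator fun _ => 1) x t =
      ∫ ξ in s, Complex.exp (schrodingerPhase x t ξ * Complex.I) := by
  rw [schrodingerExt, ← integral_indicator hs]
  congr 1 with ξ
  by_cases hξ : ξ ∈ s <;> simp [hξ, schrodingerPhase]

theorem one_half_le_cos_of_abs_le_one {r : ℝ} (hr : |r| ≤ 1) : 1 / 2 ≤ cos r := by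
  have hr2 : r ^ 2 ≤ 1 := by nlinarith [abs_nonneg r, sq_abs r]
  linarith [one_sub_sq_div_two_le_cos (x := r)]

theorem mul_measureReal_le_norm_setIntegral_exp_mul_I {α : Type*} [MeasurableSpace α]
    {μ : Measure α} {s : Set α} (hs : MeasurableSet s) (hμs : μ s ≠ ⊤) {φ : α → ℝ}
    (hφ : Measurable φ) {c : ℝ} (hc : ∀ a ∈ s, c ≤ cos (φ a)) :
    c * μ.real s ≤ ‖∫ a in s, Complex.exp (φ a * Complex.I) ∂μ‖ := by
  have hexp : IntegrableOn (fun a => Complex.exp (φ a * Complex.I)) s μ :=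
    Measure.integrableOn_of_bounded hμs (by fun_prop) (M := 1)
      (Filter.Eventually.of_forall fun a => (Complex.norm_exp_ofReal_mul_I _).le)
  have hcos : IntegrableOn (fun a => cos (φ a)) s μ :=
    Measure.integrableOn_of_bounded hμs (by fun_prop) (M := 1)
      (Filter.Eventually.of_forall fun a => by simpa using abs_cos_le_one (φ a))
  have hre : (∫ a in s, Complex.exp (φ a * Complex.I) ∂μ).re = ∫ a in s, cos (φ a) ∂μ := by
    rw [← RCLike.re_to_complex, ← integral_re hexp]
    simp only [RCLike.re_to_complex, Complex.exp_ofReal_mul_I_re]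
  calc c * μ.real s = ∫ _ in s, c ∂μ := by rw [setIntegral_const, smul_eq_mul, mul_comm]
    _ ≤ ∫ a in s, cos (φ a) ∂μ := setIntegral_mono_on (integrableOn_const hμs) hcos hs hc
    _ = (∫ a in s, Complex.exp (φ a * Complex.I) ∂μ).re := hre.symm
    _ ≤ _ := Complex.re_le_norm _

theorem EuclideanSpace.volume_preimage_ofLp_univ_pi {ι : Type*} [Fintype ι] (s : ι → Set ℝ) :
    volume (WithLp.ofLp ⁻¹' Set.univ.pi s : Set (EuclideanSpace ℝ ι)) = ∏ i, volume (s i) := by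
  rw [← volume_pi_pi]
  exact (EuclideanSpace.volume_preserving_symm_measurableEquiv_toLp ι).measure_preimage_equiv _

theorem EuclideanSpace.norm_sq_le_card_mul_sq {ι : Type*} [Fintype ι] {ξ : EuclideanSpace ℝ ι}
    {b : ℝ} (hξ : ∀ j, |ξ j| ≤ b) : ‖ξ‖ ^ 2 ≤ Fintype.card ι * b ^ 2 := by
  rw [EuclideanSpace.real_norm_sq_eq]
  calc ∑ j, ξ j ^ 2 ≤ ∑ _j : ι, b ^ 2 :=
        Finset.sum_le_sum fun j _ => sq_le_sq' (abs_le.mp (hξ j)).1 (abs_le.mp (hξ j)).2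
    _ = Fintype.card ι * b ^ 2 := by simp

theorem EuclideanSpace.abs_inner_le_card_mul {ι : Type*} [Fintype ι] {x ξ : EuclideanSpace ℝ ι}
    {a b : ℝ} (hx : ∀ j, |x j| ≤ a) (hξ : ∀ j, |ξ j| ≤ b) :
    |inner ℝ x ξ| ≤ Fintype.card ι * (a * b) := by
  rw [PiLp.inner_apply]
  calc |∑ j, inner ℝ (x j) (ξ j)| ≤ ∑ j, |x j| * |ξ j| := by
        refine (Finset.abs_sum_le_sum_abs _ _).trans_eq ?_
        simp [abs_mul, mul_comm]
    _ ≤ ∑ _j : ι, a * b :=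
        Finset.sum_le_sum fun j _ => mul_le_mul (hx j) (hξ j) (abs_nonneg _)
          ((abs_nonneg _).trans (hx j))
    _ = Fintype.card ι * (a * b) := by simp

theorem abs_schrodingerPhase_le {ι : Type*} [Fintype ι] {x ξ : EuclideanSpace ℝ ι} {t c δ : ℝ}
    (hδ : 0 < δ) (hx : ∀ j, |x j| ≤ c * δ⁻¹) (ht : |t| ≤ c * (δ ^ 2)⁻¹) (hξ : ∀ j, |ξ j| ≤ δ) :
    |schrodingerPhase x t ξ| ≤ 3 * π * Fintype.card ι * c := by
  have hnorm := EuclideanSpace.norm_sq_le_card_mul_sq hξ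
  have hinner := EuclideanSpace.abs_inner_le_card_mul hx hξ
  have hquad : |t| * ‖ξ‖ ^ 2 ≤ c * (δ ^ 2)⁻¹ * (Fintype.card ι * δ ^ 2) :=
    mul_le_mul ht hnorm (sq_nonneg _) ((abs_nonneg t).trans ht)
  have hδ2 : δ ^ 2 ≠ 0 := by positivity
  calc |schrodingerPhase x t ξ| ≤ π * (|t| * ‖ξ‖ ^ 2) + 2 * π * |inner ℝ x ξ| := by
        unfold schrodingerPhase
        refine (abs_add_le _ _).trans_eq ?_
        rw [abs_neg, abs_mul (π * t), abs_mul π, abs_mul (2 * π), abs_of_pos pi_pos,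
          abs_of_pos two_pi_pos, abs_pow, abs_norm, mul_assoc]
    _ ≤ π * (c * (δ ^ 2)⁻¹ * (Fintype.card ι * δ ^ 2)) +
          2 * π * (Fintype.card ι * (c * δ⁻¹ * δ)) := by gcongr
    _ = 3 * π * Fintype.card ι * c := by field_simp; ring

theorem three_mul_pi_mul_pred_mul_one_div_forty_mul_le_one (n : ℕ) :
    3 * π * ((n - 1 : ℕ) : ℝ) * (1 / (40 * n)) ≤ 1 := by
  rcases n.eq_zero_or_pos with rfl | hn
  · simp
  have hpred : ((n - 1 : ℕ) : ℝ) ≤ n := by exact_mod_cast n.sub_le 1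
  rw [mul_one_div, div_le_one (by positivity)]
  nlinarith [pi_le_four, pi_pos]

theorem stmt16_general (n : ℕ) (δ : ℝ) (hδ0 : 0 < δ)
    (x : EuclideanSpace ℝ (Fin (n-1))) (t : ℝ)
    (hx : ∀ j, |x j| ≤ (1 / (40 * (n : ℝ))) * δ⁻¹)
    (ht : |t| ≤ (1 / (40 * (n : ℝ))) * (δ ^ 2)⁻¹) :
    (1/2) * δ ^ (n - 1) ≤
      ‖schrodingerExt n
        (fun ξ => Set.indicator (Set.univ.pi fun _ : Fin (n-1) => Set.Icc (0 : ℝ) δ)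
          (fun _ => (1 : ℂ)) ξ) x t‖ := by
  set Q : Set (EuclideanSpace ℝ (Fin (n - 1))) :=
    WithLp.ofLp ⁻¹' Set.univ.pi fun _ => Set.Icc 0 δ
  have hQ : MeasurableSet Q :=
    (MeasurableSet.univ_pi fun _ => measurableSet_Icc).preimage (WithLp.measurable_ofLp _ _)
  have hvolQ : volume Q = ENNReal.ofReal (δ ^ (n - 1)) := by
    simp only [Q, EuclideanSpace.volume_preimage_ofLp_univ_pi, volume_Icc, sub_zero,
      Finset.prod_const, Finset.card_univ, Fintype.card_fin, ENNReal.ofReal_pow hδ0.le]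
  have hcos : ∀ ξ ∈ Q, 1 / 2 ≤ cos (schrodingerPhase x t ξ) := by
    intro ξ hξ
    have hξδ : ∀ j, |ξ j| ≤ δ := fun j => abs_le.mpr
      ⟨by linarith [(hξ j trivial).1], (hξ j trivial).2⟩
    refine one_half_le_cos_of_abs_le_one ((abs_schrodingerPhase_le hδ0 hx ht hξδ).trans ?_)
    rw [Fintype.card_fin]
    exact three_mul_pi_mul_pred_mul_one_div_forty_mul_le_one n
  calc 1 / 2 * δ ^ (n - 1) = 1 / 2 * volume.real Q := by
        rw [Measure.real_def, hvolQ, ENNReal.toReal_ofReal (by positivity)]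
    _ ≤ _ := by
        have hF : (fun ξ : EuclideanSpace ℝ (Fin (n - 1)) =>
            (Set.univ.pi fun _ => Set.Icc 0 δ).indicator (fun _ => (1 : ℂ)) (WithLp.ofLp ξ)) =
            Q.indicator fun _ => 1 := funext fun ξ => (Set.indicator_comp_right _).symm
        rw [hF, schrodingerExt_indicator_one n hQ]
        exact mul_measureReal_le_norm_setIntegral_exp_mul_I hQ (by simp [hvolQ])
          (continuous_schrodingerPhase x t).measurable hcos

/-- **Knapp example, lower bound.** For `f̂ = χ_{[0,δ]^{n-1}}` and
`c = 1/(40n)`, one has `|u(x',t)| ≥ (1/2)δ^{n-1}` whenever `|x'_j| ≤ cδ^{-1}` for each `j`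
and `|t| ≤ cδ^{-2}`. -/
theorem stmt16 (n : ℕ) (hn : 2 ≤ n) (δ : ℝ) (hδ0 : 0 < δ) (hδ1 : δ < 1)
    (x : EuclideanSpace ℝ (Fin (n-1))) (t : ℝ)
    (hx : ∀ j, |x j| ≤ (1 / (40 * (n : ℝ))) * δ⁻¹)
    (ht : |t| ≤ (1 / (40 * (n : ℝ))) * (δ ^ 2)⁻¹) :
    (1/2) * δ ^ (n - 1) ≤
      ‖schrodingerExt n
        (fun ξ => Set.indicator (Set.univ.pi fun _ : Fin (n-1) => Set.Icc (0 : ℝ) δ)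
          (fun _ => (1 : ℂ)) ξ) x t‖ :=
  stmt16_general n δ hδ0 x t hx ht
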